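/- Let T be a triangulated category with two t-structures whose aisles satisfy D₁ ⊆ D₀, with colocalization functors c₀, c₁ and localization functors l₀, l₁. Then there is a natural isomorphism l₁(c₀X) ≅ c₀(l₁X) for every object X; more precisely, the unique map φ_X : l₁(c₀X) → c₀(l₁X) making the canonical square involving c₀X → X → l₁X commute is an isomorphism. -/

import Mathlib

/-!
Complete `ε` to a morphism `(θ, ε, ψ)` from the triangle `F₁ ⟶ c₀X ⟶ l₁c₀X` to
`F₂ ⟶ X ⟶ l₁X`. In a triangle `F ⟶ M ⟶ L` with `L` right orthogonal to the shift-stable `D₁`,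
the map `F ⟶ M` induces bijections on `Hom(Y, -)` for `Y ∈ D₁`; so do `ε` and hence `θ`, which
is therefore an isomorphism. For `Y ∈ D₀`, extension-closedness of `D₀` makes
`Hom(Y, c₀X⟦1⟧) ⟶ Hom(Y, X⟦1⟧)` injective, and the five lemma for `Hom(Y, -)` shows that `ψ`
induces bijections `Hom(Y, l₁c₀X) ≅ Hom(Y, l₁X)`. As `l₁c₀X ∈ D₀`, `ψ` is then a
`D₀`-coreflection of `l₁X`, so `ψ = φ ≫ ε'` with `φ` an isomorphism; and `φ` is unique because
maps `l₁c₀X ⟶ l₁X` are determined by their restriction along `c₀X ⟶ l₁c₀X`.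
-/

open CategoryTheory Limits Pretriangulated

section Category

variable {C : Type*} [Category C]

def PostcompBijective (P : ObjectProperty C) {A X : C} (f : A ⟶ X) : Prop :=
  ∀ Y, P Y → Function.Bijective (fun g : Y ⟶ A => g ≫ f)

namespace PostcompBijective

variable {P Q : ObjectProperty C} {A B X : C} {f : A ⟶ B} {g : B ⟶ X}

lemma comp (hf : PostcompBijective P f) (hg : PostcompBijective P g) :
    PostcompBijective P (f ≫ g) := fun Y hY => by
  simpa only [Function.comp_def, Category.assoc] using (hg Y hY).comp (hf Y hY)

lemma of_comp (hfg : PostcompBijective P (f ≫ g)) (hg : PostcompBijective P g) :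
    PostcompBijective P f := fun Y hY =>
  ((hg Y hY).of_comp_iff' _).mp
    (by simpa only [Function.comp_def, Category.assoc] using hfg Y hY)

lemma of_le (h : P ≤ Q) (hf : PostcompBijective Q f) : PostcompBijective P f :=
  fun Y hY => hf Y (h Y hY)

lemma isIso (hf : PostcompBijective P f) (hA : P A) (hB : P B) : IsIso f := by
  obtain ⟨s, hs⟩ := (hf B hB).2 (𝟙 B)
  refine ⟨s, (hf A hA).1 ?_, hs⟩
  simp only [Category.assoc, hs, Category.comp_id, Category.id_comp]

end PostcompBijective

end Category

lemma postcomp_injective_iff {C : Type*} [Category C] [Preadditive C] {Y A X : C} (f : A ⟶ X) :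
    Function.Injective (fun g : Y ⟶ A => g ≫ f) ↔ ∀ g : Y ⟶ A, g ≫ f = 0 → g = 0 :=
  injective_iff_map_eq_zero (Preadditive.rightComp Y f)

section Pretriangulated

variable {C : Type*} [Category C] [Preadditive C] [HasZeroObject C] [HasShift C ℤ]
  [∀ n : ℤ, (shiftFunctor C n).Additive] [Pretriangulated C] {P : ObjectProperty C}

lemma rightOrthogonal_shift_neg_one (hP : ∀ Z, P Z → P (Z⟦(1 : ℤ)⟧)) {L : C}
    (hL : P.rightOrthogonal L) : P.rightOrthogonal (L⟦(-1 : ℤ)⟧) := fun Z f hZ => by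
  obtain ⟨g, rfl⟩ :=
    ((shiftEquiv' C (1 : ℤ) (-1) (by omega)).toAdjunction.homEquiv _ _).surjective f
  rw [Adjunction.homEquiv_unit, hL g (hP _ hZ), Functor.map_zero]
  exact comp_zero

lemma postcompBijective_mor₁ (hP : ∀ Z, P Z → P (Z⟦(1 : ℤ)⟧)) {T : Triangle C}
    (hT : T ∈ distTriang C) (h₃ : P.rightOrthogonal T.obj₃) : PostcompBijective P T.mor₁ :=
  fun Y hY => by
  refine ⟨(postcomp_injective_iff _).2 fun f hf => ?_, fun g => ?_⟩
  · obtain ⟨g, rfl⟩ := Triangle.coyoneda_exact₂ _ (inv_rot_of_distTriang _ hT) f hf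
    have hg : g = 0 := rightOrthogonal_shift_neg_one hP h₃ g hY
    rw [hg]
    exact zero_comp
  · obtain ⟨f, rfl⟩ := Triangle.coyoneda_exact₂ _ hT g (h₃ _ hY)
    exact ⟨f, rfl⟩

lemma Triangle.cancel_mor₂_of_rightOrthogonal {T : Triangle C} (hT : T ∈ distTriang C)
    (h₁ : P (T.obj₁⟦(1 : ℤ)⟧)) {L : C} (hL : P.rightOrthogonal L) {ψ ψ' : T.obj₃ ⟶ L}
    (h : T.mor₂ ≫ ψ = T.mor₂ ≫ ψ') : ψ = ψ' := by
  rw [← sub_eq_zero]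
  obtain ⟨g, hg⟩ :=
    Triangle.yoneda_exact₃ T hT (ψ - ψ') (by rw [Preadditive.comp_sub, h, sub_self])
  rw [hg, hL g h₁, comp_zero]

lemma PostcompBijective.eq_zero_of_comp_shift_map_eq_zero
    (hext : ∀ (T : Triangle C), (T ∈ distTriang C) → P T.obj₁ → P T.obj₃ → P T.obj₂)
    {A X : C} {ε : A ⟶ X} (hε : PostcompBijective P ε) (hA : P A) {Y : C} (hY : P Y)
    (v : Y ⟶ A⟦(1 : ℤ)⟧) (hv : v ≫ ε⟦(1 : ℤ)⟧' = 0) : v = 0 := by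
  -- `v` classifies an extension `A ⟶ E ⟶ Y` with `E ∈ P`, and the lift of `ε` to `E` splits it.
  obtain ⟨E, f, g, hT⟩ := distinguished_cocone_triangle₂ v
  obtain ⟨(e : E ⟶ X), he, -⟩ := complete_distinguished_triangle_morphism₂ _ _ hT
    (contractible_distinguished X) ε 0 (by rw [zero_comp]; exact hv)
  replace he : f ≫ e = ε := he.trans (Category.comp_id ε)
  obtain ⟨r, hr⟩ := (hε E (hext _ hT hA hY)).2 e
  have hfr : f ≫ r = 𝟙 A := (hε A hA).1 (by
    dsimp only at hr ⊢
    rw [Category.assoc, hr, he, Category.id_comp])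
  calc v = v ≫ (f ≫ r)⟦(1 : ℤ)⟧' := by simp [hfr]
    _ = 0 := by
      rw [Functor.map_comp, ← Category.assoc,
        show v ≫ f⟦(1 : ℤ)⟧' = 0 from comp_distTriang_mor_zero₃₁ _ hT, zero_comp]

lemma postcompBijective_hom₃ {T T' : Triangle C} (φ : T ⟶ T') (hT : T ∈ distTriang C)
    (hT' : T' ∈ distTriang C) (h₁ : IsIso φ.hom₁) (h₂ : PostcompBijective P φ.hom₂)
    (h₂' : ∀ Y, P Y → ∀ v : Y ⟶ T.obj₂⟦(1 : ℤ)⟧, v ≫ φ.hom₂⟦(1 : ℤ)⟧' = 0 → v = 0) :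
    PostcompBijective P φ.hom₃ := fun Y hY => by
  refine ⟨(postcomp_injective_iff _).2 fun x hx => ?_, fun y => ?_⟩
  · obtain ⟨y, rfl⟩ := Triangle.coyoneda_exact₃ _ hT x (by
      rw [← cancel_mono (φ.hom₁⟦(1 : ℤ)⟧'), Category.assoc, φ.comm₃, reassoc_of% hx,
        zero_comp, zero_comp])
    obtain ⟨z, hz⟩ := Triangle.coyoneda_exact₂ _ hT' (y ≫ φ.hom₂) (by
      rw [Category.assoc, ← φ.comm₂, ← Category.assoc, hx])
    have hy : y = (z ≫ inv φ.hom₁) ≫ T.mor₁ := (h₂ Y hY).1 (by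
      dsimp only
      rw [hz, Category.assoc, φ.comm₁, Category.assoc, IsIso.inv_hom_id_assoc])
    rw [hy, Category.assoc, comp_distTriang_mor_zero₁₂ _ hT, comp_zero]
  · set u := y ≫ T'.mor₃ ≫ inv (φ.hom₁⟦(1 : ℤ)⟧') with hu
    obtain ⟨x, hx⟩ := Triangle.coyoneda_exact₁ _ hT u (h₂' Y hY _ (by
      rw [Category.assoc, ← Functor.map_comp, φ.comm₁, Functor.map_comp, hu, Category.assoc,
        Category.assoc, IsIso.inv_hom_id_assoc, comp_distTriang_mor_zero₃₁ _ hT', comp_zero]))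
    obtain ⟨w, hw⟩ := Triangle.coyoneda_exact₃ _ hT' (y - x ≫ φ.hom₃) (by
      rw [Preadditive.sub_comp, Category.assoc, ← φ.comm₃, ← Category.assoc, ← hx, hu,
        Category.assoc, Category.assoc, IsIso.inv_hom_id, Category.comp_id, sub_self])
    obtain ⟨v, hv⟩ := (h₂ Y hY).2 w
    refine ⟨x + v ≫ T.mor₂, ?_⟩
    dsimp only at hv ⊢
    rw [Preadditive.add_comp, Category.assoc, φ.comm₂, ← Category.assoc, hv, ← hw,
      add_sub_cancel]

end Pretriangulated

/-- Let `D₁ ⊆ D₀` be aisles of t-structures.  Let `ε : A ⟶ X` be the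
`D₀`-colocalization of `X`, `q₁ : A ⟶ LA` the `l₁`-localization of `A` (with fiber in `D₁`
and `l₁`-local target), `q : X ⟶ LX` the `l₁`-localization of `X`, and `ε' : B ⟶ LX` the
`D₀`-colocalization of `LX`.  Then there is a unique map `φ : LA = l₁(c₀X) ⟶ c₀(l₁X) = B`
making the canonical square involving `c₀X ⟶ X ⟶ l₁X` commute, and any such `φ` is an
isomorphism. -/
theorem stmt7 {C : Type*} [Category C] [Preadditive C] [HasZeroObject C] [HasShift C ℤ]
    [∀ n : ℤ, (shiftFunctor C n).Additive] [Pretriangulated C]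
    (D₀ D₁ : C → Prop) (hsub : ∀ Z, D₁ Z → D₀ Z)
    (hshift₀ : ∀ Z, D₀ Z → D₀ (Z⟦(1 : ℤ)⟧))
    (hshift₁ : ∀ Z, D₁ Z → D₁ (Z⟦(1 : ℤ)⟧))
    (hext₀ : ∀ (T : Triangle C), (T ∈ distTriang C) → D₀ T.obj₁ → D₀ T.obj₃ → D₀ T.obj₂)
    {X A LA LX B : C}
    -- `ε : A ⟶ X` is the `D₀`-colocalization of `X`
    (hA : D₀ A) (ε : A ⟶ X)
    (hεuniv : ∀ Y, D₀ Y → Function.Bijective (fun g : Y ⟶ A => g ≫ ε))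
    -- `q₁ : A ⟶ LA` is the `l₁`-localization of `A = c₀X`
    {F₁ : C} (i₁ : F₁ ⟶ A) (q₁ : A ⟶ LA) (w₁ : LA ⟶ F₁⟦(1 : ℤ)⟧)
    (hT₁ : Triangle.mk i₁ q₁ w₁ ∈ distTriang C) (hF₁ : D₁ F₁)
    (hLA : ∀ Z, D₁ Z → ∀ f : Z ⟶ LA, f = 0)
    -- `q : X ⟶ LX` is the `l₁`-localization of `X`
    {F₂ : C} (i₂ : F₂ ⟶ X) (q : X ⟶ LX) (w₂ : LX ⟶ F₂⟦(1 : ℤ)⟧)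
    (hT₂ : Triangle.mk i₂ q w₂ ∈ distTriang C) (hF₂ : D₁ F₂)
    (hLX : ∀ Z, D₁ Z → ∀ f : Z ⟶ LX, f = 0)
    -- `ε' : B ⟶ LX` is the `D₀`-colocalization of `LX = l₁X`
    (hB : D₀ B) (ε' : B ⟶ LX)
    (hε'univ : ∀ Y, D₀ Y → Function.Bijective (fun g : Y ⟶ B => g ≫ ε')) :
    (∃! φ : LA ⟶ B, q₁ ≫ (φ ≫ ε') = ε ≫ q) ∧
      ∀ φ : LA ⟶ B, q₁ ≫ (φ ≫ ε') = ε ≫ q → IsIso φ := by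
  have hε : PostcompBijective D₀ ε := hεuniv
  have hε' : PostcompBijective D₀ ε' := hε'univ
  have hLA' : ObjectProperty.rightOrthogonal D₁ LA := fun Z f hZ => hLA Z hZ f
  have hLX' : ObjectProperty.rightOrthogonal D₁ LX := fun Z f hZ => hLX Z hZ f
  have hLA₀ : D₀ LA := hext₀ _ (rot_of_distTriang _ hT₁) hA (hsub _ (hshift₁ _ hF₁))
  obtain ⟨(θ : F₁ ⟶ F₂), hθ⟩ := Triangle.coyoneda_exact₂ _ hT₂ (i₁ ≫ ε)
    ((Category.assoc i₁ ε q).trans (hLX _ hF₁ _))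
  obtain ⟨(ψ : LA ⟶ LX), hψ₂ : q₁ ≫ ψ = ε ≫ q, hψ₃⟩ :=
    complete_distinguished_triangle_morphism _ _ hT₁ hT₂ θ ε hθ
  have hθiso : IsIso θ := by
    have hθi₂ : PostcompBijective D₁ (θ ≫ i₂) :=
      hθ ▸ (postcompBijective_mor₁ hshift₁ hT₁ hLA').comp (hε.of_le hsub)
    exact (hθi₂.of_comp (postcompBijective_mor₁ hshift₁ hT₂ hLX')).isIso hF₁ hF₂
  have hψ : PostcompBijective D₀ ψ :=
    postcompBijective_hom₃ (Triangle.homMk (Triangle.mk i₁ q₁ w₁) (Triangle.mk i₂ q w₂)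
      θ ε ψ hθ hψ₂ hψ₃) hT₁ hT₂ hθiso hε
      fun Y hY => hε.eq_zero_of_comp_shift_map_eq_zero hext₀ hA hY
  have hφψ : ∀ φ : LA ⟶ B, q₁ ≫ (φ ≫ ε') = ε ≫ q → φ ≫ ε' = ψ := fun φ h =>
    Triangle.cancel_mor₂_of_rightOrthogonal hT₁ (hshift₁ _ hF₁) hLX' (h.trans hψ₂.symm)
  obtain ⟨φ₀, hφ₀ : φ₀ ≫ ε' = ψ⟩ := (hε' LA hLA₀).2 ψ
  refine ⟨⟨φ₀, ?_, fun φ h => (hε' LA hLA₀).1 ((hφψ φ h).trans hφ₀.symm)⟩, fun φ h => ?_⟩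
  · simpa only [hφ₀] using hψ₂
  · exact ((hφψ φ h ▸ hψ).of_comp hε').isIso hLA₀ hB
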